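/- arXiv:math/0103161 — 4 statements merged into one kernel-verified Lean document; each statement's English description precedes it below -/
import Mathlib

section
/- For every nonzero complex number c, the exponential of the 2×2 complex matrix [[0, c], [−conj(c), 0]] equals the matrix [[cos|c|, (c/|c|)·sin|c|], [−(conj(c)/|c|)·sin|c|, cos|c|]]. -/
/-!
The matrix `A = !![0, c; -conj c, 0]` satisfies `A ^ 2 = -‖c‖ ^ 2 • 1`, like an imaginary quaternion.
Hence the even terms of the exponential series of `A` are scalars summing to `cos ‖c‖`, and the
odd terms are multiples of `A` summing to `(sin ‖c‖ / ‖c‖) • A`.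
-/

open Complex Matrix

open NormedSpace

section SqEqNegSmulOne

variable {𝔸 : Type*} [NormedRing 𝔸] [NormedAlgebra ℝ 𝔸] {A : 𝔸} {θ : ℝ}

theorem pow_two_mul_of_sq_eq_neg_smul_one (h : A ^ 2 = -θ ^ 2 • 1) (n : ℕ) :
    A ^ (2 * n) = ((-1) ^ n * θ ^ (2 * n)) • 1 := by
  rw [pow_mul, h, smul_pow, one_pow, neg_pow, pow_mul]

theorem pow_two_mul_add_one_of_sq_eq_neg_smul_one (h : A ^ 2 = -θ ^ 2 • 1) (n : ℕ) :
    A ^ (2 * n + 1) = ((-1) ^ n * θ ^ (2 * n)) • A := by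
  rw [pow_succ, pow_two_mul_of_sq_eq_neg_smul_one h, smul_one_mul]

theorem exp_eq_cos_add_sin_div_smul_of_sq_eq_neg_smul_one [CompleteSpace 𝔸]
    (h : A ^ 2 = -θ ^ 2 • 1) (hθ : θ ≠ 0) :
    exp A = Real.cos θ • 1 + (Real.sin θ / θ) • A := by
  refine (exp_series_hasSum_exp' (𝕂 := ℝ) A).unique (HasSum.even_add_odd ?_ ?_)
  · convert (Real.hasSum_cos θ).smul_const (1 : 𝔸) using 2 with n
    rw [pow_two_mul_of_sq_eq_neg_smul_one h, smul_smul, inv_mul_eq_div]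
  · convert ((Real.hasSum_sin θ).div_const θ).smul_const A using 2 with n
    rw [pow_two_mul_add_one_of_sq_eq_neg_smul_one h, smul_smul]
    congr 1
    field_simp
    ring

end SqEqNegSmulOne

theorem Matrix.sq_offDiag_neg_conj (c : ℂ) :
    (!![0, c; -(starRingEnd ℂ) c, 0] : Matrix (Fin 2) (Fin 2) ℂ) ^ 2 = -‖c‖ ^ 2 • 1 := by
  ext i j
  fin_cases i <;> fin_cases j <;> simp [sq, mul_apply, mul_conj', conj_mul']

/-- For every nonzero complex number `c`, the exponential of the matrix
`[[0, c], [-conj c, 0]]` is `[[cos |c|, (c/|c|) sin |c|], [-(conj c/|c|) sin |c|, cos |c|]]`. -/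
theorem exp_su2_matrix (c : ℂ) (hc : c ≠ 0) :
    NormedSpace.exp (!![0, c; -(starRingEnd ℂ) c, 0] : Matrix (Fin 2) (Fin 2) ℂ) =
      !![(Real.cos (‖c‖) : ℂ), (c / (‖c‖ : ℂ)) * Real.sin (‖c‖);
         -((starRingEnd ℂ) c / (‖c‖ : ℂ)) * Real.sin (‖c‖),
         (Real.cos (‖c‖) : ℂ)] := by
  -- `rw` fails: the lemma's `exp` goes through the operator-norm instances, equal to the goal's
  -- only up to unfolding.
  open scoped Norms.Operator in
  refine (exp_eq_cos_add_sin_div_smul_of_sq_eq_neg_smul_one (sq_offDiag_neg_conj c)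
    (norm_ne_zero_iff.mpr hc)).trans ?_
  ext i j
  fin_cases i <;> fin_cases j <;> simp [real_smul, div_mul_comm]
end

section
/- Let k be an integer and a : ℝ → ℝ a continuously differentiable function with a(0) = 0 and a(1) = kπ. Let (x₀, y₀) ∈ ℝ², and for t ∈ [0,1] set (x_t, y_t) = ψ_t(x₀,y₀) = (x₀ cos 2a(t) − y₀ sin 2a(t), x₀ sin 2a(t) + y₀ cos 2a(t)). Then the complex-valued integral ∫₀¹ ((−x_t + i y_t)/(x_t² + y_t² + 1)) · 2a'(t)·(−y_t + i x_t) dt equals −2kπi·(x₀² + y₀²)/(x₀² + y₀² + 1). -/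
open Real Complex intervalIntegral

/-!
Writing `z = x + iy`, the integrand is `θ(X_t) = -z̄ · 2a'(t) · iz / (|z|² + 1)`, and the rotation
`ψ_t` preserves `|z|² = x₀² + y₀²`. The integrand is therefore the constant
`-2i (x₀² + y₀²)/(x₀² + y₀² + 1)` times `a'(t)`, which integrates to `a(1) - a(0) = kπ`.
-/

lemma rotation_sq_add_sq (u v φ : ℝ) :
    (u * Real.cos φ - v * Real.sin φ) ^ 2 + (u * Real.sin φ + v * Real.cos φ) ^ 2 =
      u ^ 2 + v ^ 2 := by
  linear_combination (u ^ 2 + v ^ 2) * Real.sin_sq_add_cos_sq φ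

lemma theta_apply_rotationField (u v c : ℝ) :
    (((-u : ℝ) + I * (v : ℝ)) / ((u : ℝ) ^ 2 + (v : ℝ) ^ 2 + 1)) * (2 * (c : ℝ)) *
        ((-v : ℝ) + I * (u : ℝ)) =
      -2 * I * ((u ^ 2 + v ^ 2 : ℝ) : ℂ) / ((u ^ 2 + v ^ 2 : ℝ) + 1) * c := by
  have hden : (u : ℂ) ^ 2 + (v : ℂ) ^ 2 + 1 ≠ 0 := by
    exact_mod_cast (by positivity : u ^ 2 + v ^ 2 + 1 ≠ 0)
  push_cast
  field_simp
  linear_combination (u * v * c : ℂ) * I_sq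

lemma integral_ofReal_deriv {f : ℝ → ℝ} (hf : ContDiff ℝ 1 f) (a b : ℝ) :
    ∫ t in a..b, ((deriv f t : ℝ) : ℂ) = f b - f a := by
  rw [integral_ofReal, integral_deriv_eq_sub (fun t _ => hf.differentiable one_ne_zero t)
    ((hf.continuous_deriv le_rfl).intervalIntegrable _ _), ofReal_sub]

/-- The integral of the 1-form `θ = ((-x+iy)/(x²+y²+1))(dx + i dy)` on the generating vector
field of the rotation isotopy of `ℂP¹`, along the orbit of `(x₀, y₀)`:
`∫₀¹ θ(X_t) dt = -2kπi (x₀² + y₀²)/(x₀² + y₀² + 1)`. -/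
theorem integral_theta_along_isotopy (k : ℤ) (a : ℝ → ℝ)
    (ha : ContDiff ℝ 1 a) (ha0 : a 0 = 0) (ha1 : a 1 = k * π)
    (x₀ y₀ : ℝ)
    (x y : ℝ → ℝ)
    (hx : ∀ t, x t = x₀ * Real.cos (2 * a t) - y₀ * Real.sin (2 * a t))
    (hy : ∀ t, y t = x₀ * Real.sin (2 * a t) + y₀ * Real.cos (2 * a t)) :
    ∫ t in (0 : ℝ)..1,
        (((-(x t) : ℝ) + Complex.I * (y t : ℝ)) / ((x t : ℝ) ^ 2 + (y t : ℝ) ^ 2 + 1)) *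
          (2 * (deriv a t : ℝ)) * ((-(y t) : ℝ) + Complex.I * (x t : ℝ)) =
      -2 * (k : ℂ) * (π : ℂ) * Complex.I *
        ((x₀ : ℝ) ^ 2 + (y₀ : ℝ) ^ 2) / ((x₀ : ℝ) ^ 2 + (y₀ : ℝ) ^ 2 + 1) := by
  have hr : ∀ t, x t ^ 2 + y t ^ 2 = x₀ ^ 2 + y₀ ^ 2 := fun t => by
    rw [hx, hy, rotation_sq_add_sq]
  simp_rw [theta_apply_rotationField, hr]
  rw [integral_const_mul, integral_ofReal_deriv ha, ha0, ha1]
  have hden : (x₀ : ℂ) ^ 2 + (y₀ : ℂ) ^ 2 + 1 ≠ 0 := by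
    exact_mod_cast (by positivity : x₀ ^ 2 + y₀ ^ 2 + 1 ≠ 0)
  push_cast
  field_simp
  ring
end

section
/- Let k be an integer and a : ℝ → ℝ a continuously differentiable function with a(0) = 0 and a(1) = kπ. Let (x₀, y₀) ∈ ℝ², and for t ∈ [0,1] set (x_t, y_t) = ψ_t(x₀,y₀) = (x₀ cos 2a(t) − y₀ sin 2a(t), x₀ sin 2a(t) + y₀ cos 2a(t)). Then −(1/(2πi))·∫₀¹ ((−x_t + i y_t)/(x_t² + y_t² + 1))·2a'(t)·(−y_t + i x_t) dt − ∫₀¹ (a'(t)/(2π))·(x_t² + y_t² − 1)/(x_t² + y_t² + 1) dt = k/2. In particular, exp(2πi times this quantity) = e^{ikπ} = (−1)^k. -/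
open Real Complex intervalIntegral

/-!
The rotation `ψ_t` preserves `R = x₀² + y₀²`, so along the orbit both integrands are constant
multiples of `a'(t)`: pairing `θ` with `X_t` gives `-2i·R/(R+1)·a'(t)`, and the Hamiltonian is
`a'(t)/(2π)·(R-1)/(R+1)`. Since `∫₀¹ a' = kπ`, the action is
`kR/(R+1) - k(R-1)/(2(R+1)) = k/2`, whatever the starting point.
-/

theorem rotate_sq_add_sq (x y θ : ℝ) :
    (x * Real.cos θ - y * Real.sin θ) ^ 2 + (x * Real.sin θ + y * Real.cos θ) ^ 2 = x ^ 2 + y ^ 2 := by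
  linear_combination (x ^ 2 + y ^ 2) * Real.sin_sq_add_cos_sq θ

theorem integral_deriv_eq_sub_of_contDiff {f : ℝ → ℝ} (hf : ContDiff ℝ 1 f) (a b : ℝ) :
    ∫ t in a..b, deriv f t = f b - f a :=
  integral_deriv_eq_sub (fun _ _ => (hf.differentiable one_ne_zero).differentiableAt)
    ((hf.continuous_deriv le_rfl).intervalIntegrable a b)

theorem potential_mul_rotationField (x y d : ℝ) :
    (((-x : ℝ) + I * (y : ℝ)) / ((x : ℝ) ^ 2 + (y : ℝ) ^ 2 + 1) : ℂ) * (2 * (d : ℝ)) *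
        ((-y : ℝ) + I * (x : ℝ)) =
      -2 * I * ((x ^ 2 + y ^ 2) / (x ^ 2 + y ^ 2 + 1) : ℝ) * d := by
  have hpos : (0 : ℝ) < x ^ 2 + y ^ 2 + 1 := by positivity
  have hne : (x : ℂ) ^ 2 + (y : ℂ) ^ 2 + 1 ≠ 0 := by exact_mod_cast hpos.ne'
  push_cast
  field_simp
  linear_combination (x * y * d : ℂ) * I_sq

theorem exp_two_pi_I_mul_int_div_two (k : ℤ) : exp (2 * π * I * ((k : ℂ) / 2)) = (-1) ^ k := by
  rw [show 2 * (π : ℂ) * I * ((k : ℂ) / 2) = k * (π * I) by ring, exp_int_mul, exp_pi_mul_I]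

/-- The action integral of the closed rotation isotopy of `ℂP¹` equals `k/2`, and hence the
invariant `κ(ψ) = exp(2πi 𝔄_ψ(q))` equals `e^{ikπ} = (-1)^k`. -/
theorem action_integral_eq (k : ℤ) (a : ℝ → ℝ)
    (ha : ContDiff ℝ 1 a) (ha0 : a 0 = 0) (ha1 : a 1 = k * π)
    (x₀ y₀ : ℝ)
    (x y : ℝ → ℝ)
    (hx : ∀ t, x t = x₀ * Real.cos (2 * a t) - y₀ * Real.sin (2 * a t))
    (hy : ∀ t, y t = x₀ * Real.sin (2 * a t) + y₀ * Real.cos (2 * a t)) :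
    -(1 / (2 * (π : ℂ) * Complex.I)) *
        (∫ t in (0 : ℝ)..1,
          (((-(x t) : ℝ) + Complex.I * (y t : ℝ)) / ((x t : ℝ) ^ 2 + (y t : ℝ) ^ 2 + 1)) *
            (2 * (deriv a t : ℝ)) * ((-(y t) : ℝ) + Complex.I * (x t : ℝ))) -
      ((∫ t in (0 : ℝ)..1,
          (deriv a t / (2 * π)) * ((x t ^ 2 + y t ^ 2 - 1) / (x t ^ 2 + y t ^ 2 + 1)) : ℝ) : ℂ) =
      (k : ℂ) / 2 ∧
    Complex.exp (2 * (π : ℂ) * Complex.I *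
        (-(1 / (2 * (π : ℂ) * Complex.I)) *
          (∫ t in (0 : ℝ)..1,
            (((-(x t) : ℝ) + Complex.I * (y t : ℝ)) / ((x t : ℝ) ^ 2 + (y t : ℝ) ^ 2 + 1)) *
              (2 * (deriv a t : ℝ)) * ((-(y t) : ℝ) + Complex.I * (x t : ℝ))) -
        ((∫ t in (0 : ℝ)..1,
            (deriv a t / (2 * π)) * ((x t ^ 2 + y t ^ 2 - 1) / (x t ^ 2 + y t ^ 2 + 1)) : ℝ) : ℂ))) =
      (-1 : ℂ) ^ k := by
  set R := x₀ ^ 2 + y₀ ^ 2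
  have hr : ∀ t, x t ^ 2 + y t ^ 2 = R := fun t => by rw [hx, hy, rotate_sq_add_sq]
  have hΔa : ∫ t in (0 : ℝ)..1, deriv a t = k * π := by
    rw [integral_deriv_eq_sub_of_contDiff ha, ha1, ha0, sub_zero]
  have hθ : (∫ t in (0 : ℝ)..1,
      (((-(x t) : ℝ) + I * (y t : ℝ)) / ((x t : ℝ) ^ 2 + (y t : ℝ) ^ 2 + 1)) *
        (2 * (deriv a t : ℝ)) * ((-(y t) : ℝ) + I * (x t : ℝ))) =
      -2 * I * (R / (R + 1) : ℝ) * (k * π : ℝ) := by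
    simp_rw [potential_mul_rotationField, hr]
    rw [integral_const_mul, integral_ofReal, hΔa]
  have hf : (∫ t in (0 : ℝ)..1,
      (deriv a t / (2 * π)) * ((x t ^ 2 + y t ^ 2 - 1) / (x t ^ 2 + y t ^ 2 + 1))) =
      k * π / (2 * π) * ((R - 1) / (R + 1)) := by
    simp_rw [hr]
    rw [integral_mul_const, intervalIntegral.integral_div, hΔa]
  have haction : -(1 / (2 * (π : ℂ) * I)) * (-2 * I * (R / (R + 1) : ℝ) * (k * π : ℝ)) -
      ((k * π / (2 * π) * ((R - 1) / (R + 1)) : ℝ) : ℂ) = (k : ℂ) / 2 := by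
    have : (R : ℂ) + 1 ≠ 0 := by exact_mod_cast (by positivity : (0 : ℝ) < R + 1).ne'
    push_cast
    field_simp
    ring
  rw [hθ, hf, haction]
  exact ⟨rfl, exp_two_pi_I_mul_int_div_two k⟩
end

section
/- Let K be an algebraically closed field of characteristic zero, L a finite-dimensional semisimple Lie algebra over K (with nondegenerate Killing form), and H a splitting Cartan subalgebra of L. Let η : L → K be a linear functional such that η(⁅C, B⁆) = 0 for every C ∈ H and every B ∈ L, and assume η(α^∨) ≠ 0 for every nonzero root α, where α^∨ denotes the coroot of α. Then the isotropy algebra g_η = {A ∈ L : η(⁅A, B⁆) = 0 for all B ∈ L} equals H. -/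
/-!
Because `η` kills `⁅H, L⁆`, the isotropy algebra `g_η` is stable under `ad H`, so it is the sum
of its intersections with the root spaces. A vector `A ∈ g_η ∩ L_α` with `α ≠ 0` pairs with every
`B ∈ L_{-α}` to `⁅A, B⁆ = κ(A, B) t_α`, where `t_α` is a nonzero multiple of `α^∨`; regularity of
`η` forces `κ(A, L_{-α}) = 0`, hence `A = 0` by nondegeneracy of the Killing form. So only the zero
root space `H` contributes.
-/

open LieAlgebra LieModule

section Isotropy

variable {R L : Type*} [CommRing R] [LieRing L] [LieAlgebra R L]

/-- The isotropy algebra `g_η`; the condition `η ⁅H, L⁆ = 0` makes it `ad H`-stable. -/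
def isotropyLieSubmodule (η : Module.Dual R L) (H : LieSubalgebra R L)
    (hη : ∀ C ∈ H, ∀ B : L, η ⁅C, B⁆ = 0) : LieSubmodule R H L where
  carrier := {A | ∀ B, η ⁅A, B⁆ = 0}
  add_mem' {A A'} hA hA' B := by simp [hA B, hA' B]
  zero_mem' B := by simp
  smul_mem' c A hA B := by simp [hA B]
  lie_mem {C A} hA B := by
    rw [LieSubalgebra.coe_bracket_of_module, lie_lie, map_sub, hη C C.2, hA, sub_zero]

end Isotropy

section Roots

variable {K L : Type*} [Field K] [LieRing L] [LieAlgebra K L] [FiniteDimensional K L]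
  {H : LieSubalgebra K L} [H.IsCartanSubalgebra] [IsTriangularizable K H L]

lemma LieSubmodule.le_toLieSubmodule_of_forall_inf_rootSpace_eq_bot (N : LieSubmodule K H L)
    (hN : ∀ α : Weight K H L, α.IsNonZero → N ⊓ rootSpace H α = ⊥) :
    N ≤ H.toLieSubmodule := by
  rw [eq_iSup_inf_genWeightSpace (N := N)]
  refine iSup_le fun α ↦ ?_
  by_cases hα : α.IsZero
  · rw [hα.eq, ← rootSpace, rootSpace_zero_eq]
    exact inf_le_right
  · rw [hN α hα]
    exact bot_le

variable [CharZero K] [IsKilling K L]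

lemma eq_zero_of_mem_rootSpace_of_forall_dual_lie_eq_zero {η : Module.Dual K L}
    {α : Weight K H L} (hα : η (IsKilling.coroot α : L) ≠ 0) {A : L} (hA : A ∈ rootSpace H α)
    (hAη : ∀ B, η ⁅A, B⁆ = 0) : A = 0 := by
  set t := (IsKilling.cartanEquivDual H).symm α
  have ht : η t ≠ 0 := by
    contrapose! hα
    simp [IsKilling.coroot, t, hα]
  have hκ : ∀ B ∈ rootSpace H (-α), killingForm K L A B = 0 := fun B hB ↦ by
    have := hAη B
    rwa [IsKilling.lie_eq_killingForm_smul_of_mem_rootSpace_of_mem_rootSpace_neg hA hB, map_smul,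
      smul_eq_mul, mul_eq_zero, or_iff_left ht] at this
  simpa [IsKilling.ker_killingForm_eq_bot] using
    mem_ker_killingForm_of_mem_rootSpace_of_forall_rootSpace_neg K L H hA hκ

end Roots

theorem isotropy_algebra_eq_cartan_general
    (K : Type*) [Field K] [CharZero K]
    (L : Type*) [LieRing L] [LieAlgebra K L] [Module.Finite K L]
    [LieAlgebra.IsKilling K L]
    (H : LieSubalgebra K L) [H.IsCartanSubalgebra] [LieModule.IsTriangularizable K H L]
    (η : Module.Dual K L)
    (hη : ∀ C ∈ H, ∀ B : L, η ⁅C, B⁆ = 0)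
    (hreg : ∀ α : Weight K H L, α.IsNonZero → η (LieAlgebra.IsKilling.coroot α : L) ≠ 0) :
    ∀ A : L, (∀ B : L, η ⁅A, B⁆ = 0) ↔ A ∈ H := by
  have hle : isotropyLieSubmodule η H hη ≤ H.toLieSubmodule :=
    LieSubmodule.le_toLieSubmodule_of_forall_inf_rootSpace_eq_bot _ fun α hα ↦
      (LieSubmodule.eq_bot_iff _).mpr fun A ⟨hAη, hA⟩ ↦
        eq_zero_of_mem_rootSpace_of_forall_dual_lie_eq_zero (hreg α hα) hA hAη
  exact fun A ↦ ⟨fun hA ↦ hle hA, fun hA ↦ hη A hA⟩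

/-- Let `L` be a finite-dimensional semisimple Lie algebra (with nondegenerate Killing form)
over an algebraically closed field `K` of characteristic zero, and `H` a splitting Cartan
subalgebra.  If `η : L → K` is a linear functional with `η ⁅C, B⁆ = 0` for all `C ∈ H` and
`B ∈ L`, and `η` is regular in the sense that `η (α^∨) ≠ 0` for every nonzero root `α`, then
the isotropy algebra `g_η = {A : L | ∀ B, η ⁅A, B⁆ = 0}` equals `H`. -/
theorem isotropy_algebra_eq_cartan
    (K : Type*) [Field K] [IsAlgClosed K] [CharZero K]
    (L : Type*) [LieRing L] [LieAlgebra K L] [Module.Finite K L]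
    [LieAlgebra.IsKilling K L]
    (H : LieSubalgebra K L) [H.IsCartanSubalgebra] [LieModule.IsTriangularizable K H L]
    (η : Module.Dual K L)
    (hη : ∀ C ∈ H, ∀ B : L, η ⁅C, B⁆ = 0)
    (hreg : ∀ α : Weight K H L, α.IsNonZero → η (LieAlgebra.IsKilling.coroot α : L) ≠ 0) :
    ∀ A : L, (∀ B : L, η ⁅A, B⁆ = 0) ↔ A ∈ H :=
  isotropy_algebra_eq_cartan_general K L H η hη hreg
end
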